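/- The evaluation map ev : N_H → N, φ ↦ φ(1_H), is a group homomorphism satisfying ev(g·φ) = g•ev(φ) for all g ∈ G and φ ∈ N_H. Consequently, for any 1-cocycle u ∈ Z¹(H, N_H), the map G → N, g ↦ u(g)(1_H), is a 1-cocycle in Z¹(G,N), and if u, u′ ∈ Z¹(H, N_H) are cohomologous then the resulting cocycles in Z¹(G,N) are cohomologous. -/
import Mathlib


/-- A 1-cocycle of `G` in a (possibly noncommutative) group `N` on which `G`
acts on the left by group automorphisms: `u (g₁ * g₂) = u g₁ * g₁ • u g₂`. -/
def IsCocycle {G N : Type*} [Group G] [Group N] [MulDistribMulAction G N]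
    (u : G → N) : Prop :=
  ∀ g₁ g₂ : G, u (g₁ * g₂) = u g₁ * g₁ • u g₂

/-- Two maps `u v : G → N` are cohomologous if there is `n : N` with
`v g = n⁻¹ * u g * g • n` for all `g`. -/
def Cohomologous {G N : Type*} [Group G] [Group N] [MulDistribMulAction G N]
    (u v : G → N) : Prop :=
  ∃ n : N, ∀ g : G, v g = n⁻¹ * u g * g • n

/-- The induced `H`-group `N_H` of `G`-covariant maps `φ : H → N`
(those with `φ (g * h) = g • φ h`), as a subgroup of the group of all maps
`H → N` with pointwise multiplication. -/
def NHgroup {H : Type*} [Group H] (G : Subgroup H) (N : Type*) [Group N]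
    [MulDistribMulAction G N] : Subgroup (H → N) where
  carrier := {φ | ∀ (g : G) (h : H), φ ((g : H) * h) = g • φ h}
  mul_mem' := by
    intro a b ha hb g h
    simp only [Pi.mul_apply, ha g h, hb g h, smul_mul']
  one_mem' := by
    intro g h
    simp
  inv_mem' := by
    intro a ha g h
    simp only [Pi.inv_apply, ha g h, smul_inv']

/-- The left action of `H` on `N_H`, given by `(h • φ) h' = φ (h' * h)`; it is an
action by group automorphisms. -/
instance NHaction {H : Type*} [Group H] (G : Subgroup H) (N : Type*) [Group N]
    [MulDistribMulAction G N] : MulDistribMulAction H ↥(NHgroup G N) where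
  smul h φ := ⟨fun h' => (φ : H → N) (h' * h), fun g h' => by
    show (φ : H → N) ((g : H) * h' * h) = g • (φ : H → N) (h' * h)
    rw [mul_assoc]; exact φ.2 g (h' * h)⟩
  one_smul φ := by
    ext h'
    show (φ : H → N) (h' * 1) = (φ : H → N) h'
    rw [mul_one]
  mul_smul h₁ h₂ φ := by
    ext h'
    show (φ : H → N) (h' * (h₁ * h₂)) = (φ : H → N) (h' * h₁ * h₂)
    rw [mul_assoc]
  smul_mul h φ ψ := by
    ext h'
    rfl
  smul_one h := by
    ext h'
    rfl

theorem evaluation_induces_cocycles {H : Type*} [Group H] (G : Subgroup H)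
    {N : Type*} [Group N] [MulDistribMulAction G N] :
    (∀ φ ψ : ↥(NHgroup G N),
      ((φ * ψ : ↥(NHgroup G N)) : H → N) 1 = (φ : H → N) 1 * (ψ : H → N) 1) ∧
    (∀ (g : G) (φ : ↥(NHgroup G N)),
      (((g : H) • φ : ↥(NHgroup G N)) : H → N) 1 = g • ((φ : H → N) 1)) ∧
    (∀ u : H → ↥(NHgroup G N), IsCocycle u →
      IsCocycle (fun g : G => ((u (g : H) : H → N)) 1)) ∧
    (∀ u u' : H → ↥(NHgroup G N), IsCocycle u → IsCocycle u' →
      Cohomologous u u' →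
      Cohomologous (fun g : G => ((u (g : H) : H → N)) 1)
        (fun g : G => ((u' (g : H) : H → N)) 1)) := by
  have hev : ∀ (g : G) (φ : ↥(NHgroup G N)),
      (((g : H) • φ : ↥(NHgroup G N)) : H → N) 1 = g • ((φ : H → N) 1) := by
    intro g φ
    show (φ : H → N) (1 * (g : H)) = g • (φ : H → N) 1
    rw [one_mul, show (g : H) = (g : H) * 1 by rw [mul_one], φ.2 g 1]
  refine ⟨fun φ ψ => rfl, hev, ?_, ?_⟩
  · intro u hu g₁ g₂
    have := congrFun (congrArg (Subtype.val) (hu (g₁ : H) (g₂ : H))) 1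
    simp only [Subgroup.coe_mul, Pi.mul_apply] at this ⊢
    rw [this, hev g₁ (u (g₂ : H))]
  · rintro u u' hu hu' ⟨n, hn⟩
    refine ⟨(n : H → N) 1, fun g => ?_⟩
    have := congrFun (congrArg (Subtype.val) (hn (g : H))) 1
    simp only [Subgroup.coe_mul, Pi.mul_apply, Subgroup.coe_inv, Pi.inv_apply] at this
    show (u' (g : H) : H → N) 1 = _
    rw [this, hev g n]
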